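/- (Sigmoid decay of behavior expectation) Let P = α·P₋ + (1−α)·P₊ with 0 < α < 1, and let B : Σ* → {0, 1} be a behavior with B_{P₋}(s) = 0 for all prompts s (the negative component always outputs B = 0) and B_{P₊}(s) ≤ 1. If a prompt s satisfies log(P₋(s)/P₊(s)) > β·|s|, then B_P(s) ≤ 1/(1 + e^{β·|s| − log(1/α)}). -/
import Mathlib


open scoped Classical

/-- Expectation of `f` over sequences of exactly `n` sentences sampled from `P`. -/
noncomputable def expLen {S : Type*} (P : List S → ℝ) (n : ℕ) (f : List S → ℝ) : ℝ :=
  ∑' s : List S, if s.length = n then P s * f s else 0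

/-- Conditional next-sentence KL-divergence `D_KL(P(·|s) ∥ Q(·|s))`. -/
noncomputable def klNext {S : Type*} (P Q : List S → ℝ) (s : List S) : ℝ :=
  ∑' x : S, (P (s ++ [x]) / P s) * Real.log ((P (s ++ [x]) / P s) / (Q (s ++ [x]) / Q s))

/-- `P` is β-distinguishable from `Q`: for all `n ≥ 0`, the expected conditional KL over
`n` sentences sampled from `P` exceeds `β`. -/
def Disting {S : Type*} (P Q : List S → ℝ) (β : ℝ) : Prop :=
  ∀ n : ℕ, β < expLen P n (klNext P Q)

/-- Behavior expectation of the next sentence: `B_P(s₀) = E_{x∼P(·|s₀)}[B(x)]`. -/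
noncomputable def bexp {S : Type*} (P : List S → ℝ) (B : S → ℝ) (s₀ : List S) : ℝ :=
  ∑' x : S, (P (s₀ ++ [x]) / P s₀) * B x

/-- `P` is β-prompt-distinguishable from `Q`: for any prefix ending with a negatively
behaving sentence, the prompted models are β-distinguishable. -/
def PromptDisting {S : Type*} (B : S → ℝ) (P Q : List S → ℝ) (β : ℝ) : Prop :=
  ∀ s₀ : List S, ∀ x : S, B x < 0 →
    Disting (fun s => P ((s₀ ++ [x]) ++ s) / P (s₀ ++ [x]))
            (fun s => Q ((s₀ ++ [x]) ++ s) / Q (s₀ ++ [x])) β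

/-- `P` is β'-undistinguishable from `Q`: the expected log-likelihood ratio over `n`
sentences sampled from `P` is at most `β'·n`. -/
def Undisting {S : Type*} (P Q : List S → ℝ) (β' : ℝ) : Prop :=
  ∀ n : ℕ, expLen P n (fun s => Real.log (P s / Q s)) ≤ β' * n

/-- Conditional log-likelihood ratio of `P` vs `Q` for continuation `s` after prefix `s₀`. -/
noncomputable def condLogRatio {S : Type*} (P Q : List S → ℝ) (s₀ s : List S) : ℝ :=
  Real.log ((P (s₀ ++ s) / P s₀) / (Q (s₀ ++ s) / Q s₀))

/-- Mean of the conditional log-likelihood ratio over continuations of `n` sentences. -/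
noncomputable def condMean {S : Type*} (P Q : List S → ℝ) (s₀ : List S) (n : ℕ) : ℝ :=
  ∑' s : List S, if s.length = n then (P (s₀ ++ s) / P s₀) * condLogRatio P Q s₀ s else 0

/-- Variance of the conditional log-likelihood ratio over continuations of `n` sentences. -/
noncomputable def condVar {S : Type*} (P Q : List S → ℝ) (s₀ : List S) (n : ℕ) : ℝ :=
  ∑' s : List S, if s.length = n then
    (P (s₀ ++ s) / P s₀) * (condLogRatio P Q s₀ s - condMean P Q s₀ n) ^ 2 else 0

/-- `P` is σ-similar to `Q`: variance of the conditional log-likelihood ratio over `n`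
sentences is less than `n·σ²`, for every prefix. -/
def SigmaSimilar {S : Type*} (P Q : List S → ℝ) (σ : ℝ) : Prop :=
  ∀ s₀ : List S, ∀ n : ℕ, condVar P Q s₀ n < n * σ ^ 2

/-- `P` is positive w.r.t. `Q` on behavior `B`: negatively behaving sentences are always
strictly less likely under `P` than under `Q`. -/
def PositiveWrt {S : Type*} (B : S → ℝ) (P Q : List S → ℝ) : Prop :=
  ∀ s₀ : List S, ∀ x : S, B x < 0 → P (s₀ ++ [x]) / P s₀ < Q (s₀ ++ [x]) / Q s₀

/-- sigmoid decay of behavior expectation, Lemma 7: with a `{0,1}`-valued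
behavior for which the negative component always scores `0`, a prompt with
`log(P₋(s)/P₊(s)) > β·|s|` forces `B_P(s) ≤ 1/(1 + e^{β·|s| − log(1/α)})`. -/
theorem sigmoid_decay_of_behavior {S : Type*} (P Pm Pp : List S → ℝ) (B : S → ℝ)
    (α β : ℝ)
    (hα0 : 0 < α) (hα1 : α < 1) (hβ : 0 < β)
    (hPm : ∀ x, 0 ≤ Pm x) (hPp : ∀ x, 0 ≤ Pp x)
    (hB01 : ∀ x, B x = 0 ∨ B x = 1)
    (hmix : ∀ x, P x = α * Pm x + (1 - α) * Pp x)
    (hBm : ∀ s : List S, bexp Pm B s = 0)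
    (hBp : ∀ s : List S, bexp Pp B s ≤ 1)
    (s : List S)
    (hPms : 0 < Pm s) (hPps : 0 < Pp s)
    (hprompt : β * s.length < Real.log (Pm s / Pp s)) :
    bexp P B s ≤ 1 / (1 + Real.exp (β * s.length - Real.log (1 / α))) := by
  have h1α : 0 < 1 - α := by linarith
  have hBnn : ∀ x, 0 ≤ B x := fun x => by rcases hB01 x with h | h <;> simp [h]
  have hB1 : ∀ x, B x ≤ 1 := fun x => by rcases hB01 x with h | h <;> simp [h]
  set E := Real.exp (β * s.length) with hE
  have hEpos : 0 < E := Real.exp_pos _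
  have hexp : Real.exp (β * s.length - Real.log (1 / α)) = α * E := by
    rw [Real.exp_sub, Real.exp_log (by positivity : (0:ℝ) < 1 / α)]
    field_simp [hE]
    ring
  have hElt : E * Pp s < Pm s := by
    have := (Real.lt_log_iff_exp_lt (by positivity : (0:ℝ) < Pm s / Pp s)).mp hprompt
    rw [lt_div_iff₀ hPps] at this
    exact this
  have hPs : 0 < P s := by rw [hmix]; positivity
  have hrhs : 0 < 1 + Real.exp (β * s.length - Real.log (1 / α)) := by positivity
  have key : (1 - α) * Pp s / P s ≤ 1 / (1 + Real.exp (β * s.length - Real.log (1 / α))) := by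
    rw [hexp, div_le_div_iff₀ hPs (by positivity)]
    rw [hmix]
    nlinarith [mul_lt_mul_of_pos_left hElt hα0,
      mul_nonneg (mul_nonneg (mul_nonneg hα0.le hα0.le) hEpos.le) hPps.le]
  by_cases hsum : Summable (fun x => (P (s ++ [x]) / P s) * B x)
  · have hfg : ∀ x, (P (s ++ [x]) / P s) * B x =
        (α * Pm s / P s) * ((Pm (s ++ [x]) / Pm s) * B x) +
        ((1 - α) * Pp s / P s) * ((Pp (s ++ [x]) / Pp s) * B x) := by
      intro x
      rw [hmix (s ++ [x])]
      field_simp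
    have hgnn : ∀ x, 0 ≤ (Pm (s ++ [x]) / Pm s) * B x := fun x =>
      mul_nonneg (div_nonneg (hPm _) hPms.le) (hBnn x)
    have hhnn : ∀ x, 0 ≤ (Pp (s ++ [x]) / Pp s) * B x := fun x =>
      mul_nonneg (div_nonneg (hPp _) hPps.le) (hBnn x)
    have hg : Summable (fun x => (Pm (s ++ [x]) / Pm s) * B x) := by
      refine Summable.of_nonneg_of_le hgnn (fun x => ?_) (hsum.mul_left (P s / (α * Pm s)))
      have h1 : α * (Pm (s ++ [x]) * B x) ≤ P (s ++ [x]) * B x := by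
        rw [hmix (s ++ [x])]
        nlinarith [mul_nonneg (hPp (s ++ [x])) (hBnn x)]
      calc (Pm (s ++ [x]) / Pm s) * B x
          = (α * (Pm (s ++ [x]) * B x)) / (α * Pm s) := by field_simp
        _ ≤ (P (s ++ [x]) * B x) / (α * Pm s) :=
            (div_le_div_iff_of_pos_right (by positivity)).mpr h1
        _ = (P s / (α * Pm s)) * ((P (s ++ [x]) / P s) * B x) := by field_simp
    have hh : Summable (fun x => (Pp (s ++ [x]) / Pp s) * B x) := by
      refine Summable.of_nonneg_of_le hhnn (fun x => ?_) (hsum.mul_left (P s / ((1 - α) * Pp s)))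
      have h1 : (1 - α) * (Pp (s ++ [x]) * B x) ≤ P (s ++ [x]) * B x := by
        rw [hmix (s ++ [x])]
        nlinarith [mul_nonneg (hPm (s ++ [x])) (hBnn x)]
      calc (Pp (s ++ [x]) / Pp s) * B x
          = ((1 - α) * (Pp (s ++ [x]) * B x)) / ((1 - α) * Pp s) := by field_simp
        _ ≤ (P (s ++ [x]) * B x) / ((1 - α) * Pp s) :=
            (div_le_div_iff_of_pos_right (by positivity)).mpr h1
        _ = (P s / ((1 - α) * Pp s)) * ((P (s ++ [x]) / P s) * B x) := by field_simp
    have hdecomp : bexp P B s =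
        (α * Pm s / P s) * bexp Pm B s + ((1 - α) * Pp s / P s) * bexp Pp B s := by
      unfold bexp
      rw [tsum_congr hfg, Summable.tsum_add (hg.mul_left _) (hh.mul_left _),
        tsum_mul_left, tsum_mul_left]
    rw [hdecomp, hBm s, mul_zero, zero_add]
    calc ((1 - α) * Pp s / P s) * bexp Pp B s ≤ ((1 - α) * Pp s / P s) * 1 :=
          mul_le_mul_of_nonneg_left (hBp s) (by positivity)
      _ = (1 - α) * Pp s / P s := mul_one _
      _ ≤ _ := key
  · rw [bexp, tsum_eq_zero_of_not_summable hsum]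
    positivity
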